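/- arXiv:1307.2007 — 3 statements merged into one kernel-verified Lean document; each statement's English description precedes it below -/
import Mathlib

section
/- Let G be a connected graph with at least three vertices. If G has two adjacent vertices each of minimum degree δ(G), then κ₃(G) ≤ δ(G) − 1. -/
open SimpleGraph

/-- An `S`-Steiner tree in `G`: a subgraph that is a tree and contains `S`. -/
def IsSteinerTree {V : Type*} (G : SimpleGraph V) (S : Set V) (T : G.Subgraph) : Prop :=
  T.coe.IsTree ∧ S ⊆ T.verts

/-- Two `S`-trees are internally disjoint: edge-disjoint and meeting exactly in `S`. -/
def IntDisjoint {V : Type*} (S : Set V) {G : SimpleGraph V} (T₁ T₂ : G.Subgraph) : Prop :=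
  T₁.verts ∩ T₂.verts = S ∧ ∀ u v, ¬ (T₁.Adj u v ∧ T₂.Adj u v)

/-- `κ(S)`: the maximum number of pairwise internally disjoint `S`-Steiner trees. -/
noncomputable def steinerConn {V : Type*} (G : SimpleGraph V) (S : Set V) : ℕ :=
  sSup {n | ∃ f : Fin n → G.Subgraph,
    (∀ i, IsSteinerTree G S (f i)) ∧ ∀ i j, i ≠ j → IntDisjoint S (f i) (f j)}

/-- The generalized `k`-connectivity `κ_k(G)`. -/
noncomputable def genConn {V : Type*} (G : SimpleGraph V) (k : ℕ) : ℕ :=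
  sInf {c | ∃ S : Set V, S.ncard = k ∧ steinerConn G S = c}

/-- `G` is `k`-connected: more than `k` vertices, and removing fewer than `k`
vertices leaves it connected. -/
def KConnected {V : Type*} (G : SimpleGraph V) (k : ℕ) : Prop :=
  k < Nat.card V ∧ ∀ s : Set V, s.Finite → s.ncard < k → (G.induce sᶜ).Connected

/-- The vertex connectivity `κ(G)`. -/
noncomputable def vconn {V : Type*} (G : SimpleGraph V) : ℕ :=
  sSup {k | KConnected G k}

/-- The lexicographic product `G ∘ H`. -/
def lexProd {V W : Type*} (G : SimpleGraph V) (H : SimpleGraph W) : SimpleGraph (V × W) where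
  Adj a b := G.Adj a.1 b.1 ∨ (a.1 = b.1 ∧ H.Adj a.2 b.2)
  symm := by
    constructor
    intro a b h
    rcases h with h | ⟨h1, h2⟩
    · exact Or.inl h.symm
    · exact Or.inr ⟨h1.symm, h2.symm⟩
  loopless := by
    constructor
    intro a h
    rcases h with h | ⟨_, h2⟩
    · exact G.loopless.irrefl _ h
    · exact H.loopless.irrefl _ h2

/-- The star `K_{1,m}` on `m + 1` vertices: center `none`, leaves `some i`. -/
def starGraph (m : ℕ) : SimpleGraph (Option (Fin m)) where
  Adj u v := u ≠ v ∧ (u = none ∨ v = none)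
  symm := by constructor; intro u v ⟨h1, h2⟩; exact ⟨h1.symm, h2.symm⟩
  loopless := by constructor; intro u ⟨h1, _⟩; exact h1 rfl

/-
Take adjacent vertices `u`, `v` of minimum degree and any third vertex `w`; it suffices to bound
the number of internally disjoint `{u, v, w}`-Steiner trees. The edge `uv` lies in at most one of
them. If in every tree `u` has a neighbour other than `v`, these neighbours are distinct, so there
are at most `deg u - 1` trees. Otherwise some tree `T₀` reaches `u` only through `uv`; since `T₀`
must leave `{u, v}` to reach `w`, `v` has a neighbour other than `u` in `T₀`, and in every other
tree too, because `uv` is already used by `T₀`. Hence there are at most `deg v - 1` trees.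
-/

namespace SimpleGraph

variable {V : Type*} {G : SimpleGraph V}

namespace Subgraph

theorem exists_boundary_adj {T : G.Subgraph} (hT : T.coe.Preconnected) {s : Set V} {a b : V}
    (ha : a ∈ T.verts) (hb : b ∈ T.verts) (has : a ∈ s) (hbs : b ∉ s) :
    ∃ x ∈ s, ∃ y ∉ s, T.Adj x y := by
  obtain ⟨p⟩ := hT ⟨a, ha⟩ ⟨b, hb⟩
  obtain ⟨d, -, hd₁, hd₂⟩ := p.exists_boundary_dart {x | x.val ∈ s} has hbs
  exact ⟨_, hd₁, _, hd₂, d.adj⟩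

theorem exists_adj_of_mem_of_ne {T : G.Subgraph} (hT : T.coe.Preconnected) {a b : V}
    (ha : a ∈ T.verts) (hb : b ∈ T.verts) (hab : a ≠ b) : ∃ x, T.Adj a x := by
  obtain ⟨x, rfl, y, -, hxy⟩ := exists_boundary_adj (s := {a}) hT ha hb rfl hab.symm
  exact ⟨y, hxy⟩

end Subgraph

variable {ι : Type*} [Fintype ι]

theorem card_le_degree_sub_one_of_edgeDisjoint [Fintype V] [DecidableRel G.Adj] {a b : V}
    (hab : G.Adj a b) (f : ι → G.Subgraph)
    (hf : Pairwise fun i j => ∀ x y, ¬ ((f i).Adj x y ∧ (f j).Adj x y))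
    (ha : ∀ i, ∃ x, x ≠ b ∧ (f i).Adj a x) :
    Fintype.card ι ≤ G.degree a - 1 := by
  classical
  choose g hgb hga using ha
  have hcard := Finset.card_le_card_of_injOn g
    (s := Finset.univ) (t := (G.neighborFinset a).erase b)
    (fun i _ => Finset.mem_erase.mpr ⟨hgb i, (G.mem_neighborFinset a _).mpr ((f i).adj_sub (hga i))⟩)
    (fun i _ j _ hij => by_contra fun hne => hf hne a (g i) ⟨hga i, hij ▸ hga j⟩)
  rwa [Finset.card_univ, Finset.card_erase_of_mem ((G.mem_neighborFinset a b).mpr hab),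
    card_neighborFinset_eq_degree] at hcard

theorem card_le_degree_sub_one_or_of_edgeDisjoint [Fintype V] [DecidableRel G.Adj] {u v w : V}
    (huv : G.Adj u v) (hwu : w ≠ u) (hwv : w ≠ v) (f : ι → G.Subgraph)
    (hconn : ∀ i, (f i).coe.Preconnected) (hmem : ∀ i, {u, v, w} ⊆ (f i).verts)
    (hf : Pairwise fun i j => ∀ x y, ¬ ((f i).Adj x y ∧ (f j).Adj x y)) :
    Fintype.card ι ≤ G.degree u - 1 ∨ Fintype.card ι ≤ G.degree v - 1 := by
  have hu i : u ∈ (f i).verts := hmem i (by simp)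
  have hv i : v ∈ (f i).verts := hmem i (by simp)
  have hw i : w ∈ (f i).verts := hmem i (by simp)
  by_cases hexit : ∀ i, ∃ x, x ≠ v ∧ (f i).Adj u x
  · exact .inl (card_le_degree_sub_one_of_edgeDisjoint huv f hf hexit)
  push Not at hexit
  obtain ⟨i₀, hi₀⟩ := hexit
  have huv₀ : (f i₀).Adj u v := by
    obtain ⟨x, hx⟩ := Subgraph.exists_adj_of_mem_of_ne (hconn i₀) (hu i₀) (hw i₀) hwu.symm
    obtain rfl : x = v := by_contra fun hxv => hi₀ x hxv hx
    exact hx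
  refine .inr (card_le_degree_sub_one_of_edgeDisjoint huv.symm f hf fun i => ?_)
  rcases eq_or_ne i i₀ with rfl | hi
  · obtain ⟨x, hx, y, hy, hxy⟩ := Subgraph.exists_boundary_adj (s := {u, v}) (hconn i)
      (hu i) (hw i) (by simp) (by simp [hwu, hwv])
    simp only [Set.mem_insert_iff, Set.mem_singleton_iff, not_or] at hx hy
    rcases hx with rfl | rfl
    · exact absurd hxy (hi₀ y hy.2)
    · exact ⟨y, hy.1, hxy⟩
  · obtain ⟨y, hy⟩ := Subgraph.exists_adj_of_mem_of_ne (hconn i) (hv i) (hw i) hwv.symm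
    refine ⟨y, ?_, hy⟩
    rintro rfl
    exact hf hi v _ ⟨hy, huv₀.symm⟩

theorem steinerConn_le_max_degree_sub_one [Fintype V] [DecidableRel G.Adj] {u v w : V}
    (huv : G.Adj u v) (hwu : w ≠ u) (hwv : w ≠ v) :
    steinerConn G {u, v, w} ≤ max (G.degree u - 1) (G.degree v - 1) := by
  refine csSup_le' fun n ⟨f, htree, hdisj⟩ => ?_
  have := card_le_degree_sub_one_or_of_edgeDisjoint huv hwu hwv f
    (fun i => (htree i).1.connected.preconnected) (fun i => (htree i).2)
    (fun _ _ hij => (hdisj _ _ hij).2)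
  rw [Fintype.card_fin] at this
  exact this.elim (le_max_of_le_left ·) (le_max_of_le_right ·)

end SimpleGraph

theorem genConn_three_le_minDegree_sub_one_general {V : Type*} [Fintype V] (G : SimpleGraph V)
    [DecidableRel G.Adj] (hV : 3 ≤ Fintype.card V)
    (h : ∃ u v : V, G.Adj u v ∧ G.degree u = G.minDegree ∧ G.degree v = G.minDegree) :
    genConn G 3 ≤ G.minDegree - 1 := by
  obtain ⟨u, v, huv, hu, hv⟩ := h
  obtain ⟨w, hwu, hwv⟩ :=
    ENat.exists_ne_ne_of_three_le (by simpa [ENat.card_eq_coe_fintype_card] using hV) u v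
  have hS : ({u, v, w} : Set V).ncard = 3 :=
    Set.ncard_eq_three.mpr ⟨u, v, w, huv.ne, hwu.symm, hwv.symm, rfl⟩
  calc genConn G 3 ≤ steinerConn G {u, v, w} := Nat.sInf_le ⟨_, hS, rfl⟩
    _ ≤ max (G.degree u - 1) (G.degree v - 1) := steinerConn_le_max_degree_sub_one huv hwu hwv
    _ = G.minDegree - 1 := by rw [hu, hv, max_self]

/-- If a connected graph on at least three vertices has two adjacent vertices of
minimum degree, then `κ₃(G) ≤ δ(G) - 1`. -/
theorem genConn_three_le_minDegree_sub_one {V : Type*} [Fintype V] (G : SimpleGraph V)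
    [DecidableRel G.Adj] (hG : G.Connected) (hV : 3 ≤ Fintype.card V)
    (h : ∃ u v : V, G.Adj u v ∧ G.degree u = G.minDegree ∧ G.degree v = G.minDegree) :
    genConn G 3 ≤ G.minDegree - 1 :=
  genConn_three_le_minDegree_sub_one_general G hV h
end

section
/- For any two connected graphs G and H, κ(G □ H) ≥ κ(G) + κ(H), where G □ H is the Cartesian product. -/
open SimpleGraph

/-! Let `S` be a set of fewer than `κ(G) + κ(H)` vertices of `G □ H`. If every fiber `{u} × W`
loses fewer than `κ(H)` vertices, these fibers stay connected; were `G □ H - S` disconnected, let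
`A ⊆ V` index the fibers meeting one component. Every fiber `V × {w}` then contains `A`, contains
`Aᶜ`, or separates `G`, and counting these rows gives `|S| ≥ κ(G) + κ(H)`. The same holds with the
roles of `G` and `H` swapped. Otherwise one fiber `{c₀} × W` loses at least `κ(H)` and one fiber
`V × {r₀}` at least `κ(G)` vertices, so `S` is exactly the cross formed by these two fibers. Then
some fiber `V × {r₁}` misses `S`, and every vertex reaches it through a fiber `{u} × W` missing `S`,
after at most one step in `G` (possible because `δ(G) ≥ κ(G)`). -/

section BoxProdConnectivity

variable {V W : Type*} {G : SimpleGraph V} {H : SimpleGraph W} {a b : ℕ}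

theorem KConnected.bddAbove (G : SimpleGraph V) : BddAbove {k | KConnected G k} :=
  ⟨Nat.card V, fun _ hk => hk.1.le⟩

theorem KConnected.le_vconn (h : KConnected G a) : a ≤ vconn G :=
  le_csSup (KConnected.bddAbove G) h

theorem kConnected_vconn [Finite V] (hG : G.Connected) : KConnected G (vconn G) := by
  have := hG.nonempty
  exact Nat.sSup_mem (s := {k | KConnected G k})
    ⟨0, Nat.card_pos, fun _ _ h => absurd h (Nat.not_lt_zero _)⟩ (KConnected.bddAbove G)

theorem KConnected.le_ncard_neighborSet [Finite V] (h : KConnected G a) (u : V) :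
    a ≤ (G.neighborSet u).ncard := by
  by_contra! hlt
  have : Nontrivial ↥(G.neighborSet u)ᶜ := by
    rw [Set.nontrivial_coe_sort, ← Set.one_lt_ncard_iff_nontrivial]
    have := Set.ncard_add_ncard_compl (G.neighborSet u)
    have := h.1
    omega
  obtain ⟨z, hz⟩ := (h.2 _ (Set.toFinite _) hlt).preconnected.exists_adj_of_nontrivial
    ⟨u, G.notMem_neighborSet_self⟩
  exact z.2 hz

theorem KConnected.exists_adj_notMem [Finite V] (h : KConnected G a) {s : Set V}
    (hs : s.ncard ≤ a) {u : V} (hu : u ∈ s) : ∃ p, G.Adj u p ∧ p ∉ s := by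
  by_contra! hN
  have hsub : G.neighborSet u ⊆ s \ {u} := fun p hp => ⟨hN p hp, (G.ne_of_adj hp).symm⟩
  have := (Set.ncard_le_ncard hsub).trans_eq (Set.ncard_sdiff_singleton_of_mem hu)
  have := h.le_ncard_neighborSet u
  have := (Set.nonempty_of_mem hu).ncard_pos
  omega

theorem KConnected.le_ncard_of_not_preconnected [Finite V] (hG : G.Connected)
    (h : KConnected G a) {s : Set V} (hs : ¬ (G.induce sᶜ).Preconnected) :
    a ≤ s.ncard ∧ s.Nonempty := by
  refine ⟨?_, Set.nonempty_iff_ne_empty.2 ?_⟩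
  · by_contra! hlt
    exact hs (h.2 s (Set.toFinite s) hlt).preconnected
  · rintro rfl
    rw [Set.compl_empty] at hs
    exact hs ((induceUnivIso G).connected_iff.2 hG).preconnected

theorem Set.ncard_eq_sum_ncard_preimage_prodMk_right [Fintype V] [Fintype W] (S : Set (V × W)) :
    S.ncard = ∑ w, ((·, w) ⁻¹' S).ncard := by
  classical
  simp only [Set.ncard_eq_toFinset_card', Set.toFinset_card, Fintype.card_subtype,
    Finset.card_filter]
  rw [Fintype.sum_prod_type_right]
  rfl

theorem add_le_ncard_of_row_trichotomy [Fintype V] [Fintype W] {S : Set (V × W)} {A : Set V}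
    (hA : A.Nonempty) (hAc : Aᶜ.Nonempty) (hV : a < Nat.card V) (hW : b < Nat.card W)
    (hcol : ∀ u, (Prod.mk u ⁻¹' S).ncard < b)
    (hrow : ∀ w, A ⊆ (·, w) ⁻¹' S ∨ Aᶜ ⊆ (·, w) ⁻¹' S ∨
      (a ≤ ((·, w) ⁻¹' S).ncard ∧ ((·, w) ⁻¹' S).Nonempty)) :
    a + b ≤ S.ncard := by
  classical
  by_cases hbig : ∃ w₀, a ≤ ((·, w₀) ⁻¹' S).ncard
  · obtain ⟨w₀, hw₀⟩ := hbig
    have hpos : ∀ w, 1 ≤ ((·, w) ⁻¹' S).ncard := fun w => by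
      rcases hrow w with h | h | h
      exacts [(hA.mono h).ncard_pos, (hAc.mono h).ncard_pos, h.2.ncard_pos]
    have hrest := Finset.card_nsmul_le_sum (Finset.univ.erase w₀) _ 1 fun w _ => hpos w
    rw [smul_eq_mul, mul_one, Finset.card_erase_of_mem (Finset.mem_univ w₀), Finset.card_univ,
      ← Nat.card_eq_fintype_card] at hrest
    rw [Set.ncard_eq_sum_ncard_preimage_prodMk_right,
      ← Finset.add_sum_erase _ _ (Finset.mem_univ w₀)]
    omega
  · push Not at hbig
    obtain ⟨u, hu⟩ := hA
    obtain ⟨v, hv⟩ := hAc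
    set T : Set W := {w | A ⊆ (·, w) ⁻¹' S}
    have hTc : ∀ w ∉ T, Aᶜ ⊆ (·, w) ⁻¹' S := fun w hw =>
      ((hrow w).resolve_left hw).resolve_right fun h => (hbig w).not_ge h.1
    have hsub : A ×ˢ T ∪ Aᶜ ×ˢ Tᶜ ⊆ S := by
      rintro ⟨u', w⟩ (⟨hu', hw⟩ | ⟨hu', hw⟩)
      exacts [hw hu', hTc w hw hu']
    have hdisj : Disjoint (A ×ˢ T) (Aᶜ ×ˢ Tᶜ) := Set.disjoint_prod.2 (Or.inl disjoint_compl_right)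
    have hS := Set.ncard_le_ncard hsub
    rw [Set.ncard_union_eq hdisj, Set.ncard_prod, Set.ncard_prod] at hS
    have hT : T.ncard < b :=
      (Set.ncard_le_ncard (s := T) fun w hw => hw hu).trans_lt (hcol u)
    have hT' : Tᶜ.ncard < b :=
      (Set.ncard_le_ncard (s := Tᶜ) fun w hw => hTc w hw hv).trans_lt (hcol v)
    have hA1 := (Set.nonempty_of_mem hu).ncard_pos
    have hA2 := (Set.nonempty_of_mem hv).ncard_pos
    have hVsum := Set.ncard_add_ncard_compl A
    have hWsum := Set.ncard_add_ncard_compl T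
    -- `|T|, |Tᶜ| ≥ 1`, so `|A| |T| + |Aᶜ| |Tᶜ| ≥ |T| + |Tᶜ| + |A| + |Aᶜ| - 2 ≥ b + a`
    nlinarith

theorem subset_cross_of_ncard_lt [Finite V] [Finite W] {S : Set (V × W)} {c₀ : V} {r₀ : W}
    (hc₀ : b ≤ (Prod.mk c₀ ⁻¹' S).ncard) (hr₀ : a ≤ ((·, r₀) ⁻¹' S).ncard)
    (hS : S.ncard < a + b) :
    (c₀, r₀) ∈ S ∧ (Prod.mk c₀ ⁻¹' S).ncard = b ∧ ((·, r₀) ⁻¹' S).ncard = a ∧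
      ∀ u w, (u, w) ∈ S → u = c₀ ∨ w = r₀ := by
  set C := Prod.mk c₀ ⁻¹' S
  set R := (·, r₀) ⁻¹' S
  have hunion := Set.ncard_union_add_ncard_inter ({c₀} ×ˢ C) (R ×ˢ {r₀})
  simp only [Set.ncard_prod, Set.ncard_singleton, one_mul, mul_one] at hunion
  have hK : {c₀} ×ˢ C ∪ R ×ˢ {r₀} ⊆ S := by
    rintro ⟨u, w⟩ (⟨rfl, hw⟩ | ⟨hu, rfl⟩)
    exacts [hw, hu]
  have hinter : {c₀} ×ˢ C ∩ R ×ˢ {r₀} ⊆ {(c₀, r₀)} ∩ S := by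
    rintro ⟨u, w⟩ ⟨⟨rfl, hw⟩, ⟨-, rfl⟩⟩
    exact ⟨rfl, hw⟩
  have hKS := Set.ncard_le_ncard hK
  have hmem : (c₀, r₀) ∈ S := by
    by_contra h
    rw [Set.singleton_inter_eq_empty.2 h, Set.subset_empty_iff] at hinter
    rw [hinter, Set.ncard_empty] at hunion
    omega
  have hI := (Set.ncard_le_ncard hinter).trans (Set.ncard_inter_le_ncard_left _ _)
  rw [Set.ncard_singleton] at hI
  have hKeq := Set.eq_of_subset_of_ncard_le hK (by omega)
  refine ⟨hmem, by omega, by omega, fun u w hz => ?_⟩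
  rw [← hKeq] at hz
  rcases hz with ⟨h, -⟩ | ⟨-, h⟩
  exacts [Or.inl h, Or.inr h]

theorem KConnected.reachable_induce_compl_of_col [Finite W] (hHb : KConnected H b)
    {S : Set (V × W)} {u : V} (hu : (Prod.mk u ⁻¹' S).ncard < b) {p q : W}
    (hp : (u, p) ∈ Sᶜ) (hq : (u, q) ∈ Sᶜ) :
    ((G □ H).induce Sᶜ).Reachable ⟨(u, p), hp⟩ ⟨(u, q), hq⟩ :=
  ((hHb.2 _ (Set.toFinite _) hu).preconnected ⟨p, hp⟩ ⟨q, hq⟩).map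
    (induceHom (s := (Prod.mk u ⁻¹' S)ᶜ) (t := Sᶜ) (boxProdRight G H u).toHom fun _ h => h)

theorem KConnected.reachable_induce_compl_of_row [Finite V] (hGa : KConnected G a)
    {S : Set (V × W)} {w : W} (hw : ((·, w) ⁻¹' S).ncard < a) {p q : V}
    (hp : (p, w) ∈ Sᶜ) (hq : (q, w) ∈ Sᶜ) :
    ((G □ H).induce Sᶜ).Reachable ⟨(p, w), hp⟩ ⟨(q, w), hq⟩ :=
  ((hGa.2 _ (Set.toFinite _) hw).preconnected ⟨p, hp⟩ ⟨q, hq⟩).map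
    (induceHom (s := ((·, w) ⁻¹' S)ᶜ) (t := Sᶜ) (boxProdLeft G H w).toHom fun _ h => h)

theorem preconnected_induce_compl_swap_iff {S : Set (V × W)} :
    ((H □ G).induce (Prod.swap ⁻¹' S)ᶜ).Preconnected ↔ ((G □ H).induce Sᶜ).Preconnected :=
  ((boxProdComm H G).induce (s := (Prod.swap ⁻¹' S)ᶜ) (t := Sᶜ)
    (Equiv.bijOn _ fun _ => Iff.rfl)).preconnected_iff

theorem preconnected_induce_compl_of_forall_col [Fintype V] [Fintype W] (hG : G.Connected)
    (hGa : KConnected G a) (hHb : KConnected H b) {S : Set (V × W)} (hS : S.ncard < a + b)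
    (hcol : ∀ u, (Prod.mk u ⁻¹' S).ncard < b) : ((G □ H).induce Sᶜ).Preconnected := by
  intro x y
  by_contra hxy
  have hcolReach : ∀ p q : ↥Sᶜ, p.1.1 = q.1.1 → ((G □ H).induce Sᶜ).Reachable p q := by
    rintro ⟨⟨u, w⟩, hp⟩ ⟨⟨u', w'⟩, hq⟩ (rfl : u = u')
    exact hHb.reachable_induce_compl_of_col (hcol u) hp hq
  set A : Set V := {u | ∃ p : ↥Sᶜ, p.1.1 = u ∧ ((G □ H).induce Sᶜ).Reachable p x}
  have hxA : x.1.1 ∈ A := ⟨x, rfl, .rfl⟩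
  have hyA : y.1.1 ∉ A := fun ⟨p, hp, hpx⟩ => hxy ((hcolReach y p hp.symm).trans hpx).symm
  have hsep : ∀ w, A ⊆ (·, w) ⁻¹' S ∨ Aᶜ ⊆ (·, w) ⁻¹' S ∨
      ¬ (G.induce ((·, w) ⁻¹' S)ᶜ).Preconnected := by
    intro w
    by_contra! h
    obtain ⟨hA, hAc, hpre⟩ := h
    obtain ⟨p, hpA, hpS⟩ := Set.not_subset.1 hA
    obtain ⟨q, hqA, hqS⟩ := Set.not_subset.1 hAc
    obtain ⟨walk⟩ := hpre ⟨p, hpS⟩ ⟨q, hqS⟩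
    obtain ⟨d, -, ⟨z, hz, hzx⟩, hd⟩ := walk.exists_boundary_dart {z | z.1 ∈ A} hpA hqA
    have hadj : ((G □ H).induce Sᶜ).Adj ⟨(d.snd.1, w), d.snd.2⟩ ⟨(d.fst.1, w), d.fst.2⟩ :=
      boxProd_adj.2 (Or.inl ⟨d.adj.symm, rfl⟩)
    exact hd ⟨_, rfl, hadj.reachable.trans ((hcolReach _ z hz.symm).trans hzx)⟩
  exact hS.not_ge <| add_le_ncard_of_row_trichotomy ⟨_, hxA⟩ ⟨_, hyA⟩ hGa.1 hHb.1 hcol fun w =>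
    (hsep w).imp_right (Or.imp_right (hGa.le_ncard_of_not_preconnected hG))

theorem preconnected_induce_compl_of_col_row [Finite V] [Finite W] (hGa : KConnected G a)
    (hHb : KConnected H b) {S : Set (V × W)} (hS : S.ncard < a + b) {c₀ : V} {r₀ : W}
    (hc₀ : b ≤ (Prod.mk c₀ ⁻¹' S).ncard) (hr₀ : a ≤ ((·, r₀) ⁻¹' S).ncard) :
    ((G □ H).induce Sᶜ).Preconnected := by
  obtain ⟨hmem, hC, hR, hcross⟩ := subset_cross_of_ncard_lt hc₀ hr₀ hS
  obtain ⟨r₁, hr₁⟩ : ∃ r₁, (c₀, r₁) ∉ S := by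
    by_contra! h
    have := hHb.1
    rw [← Set.ncard_univ, ← hC, (Set.eq_univ_of_forall h : Prod.mk c₀ ⁻¹' S = _)] at this
    exact this.false
  have hrow₁ : ∀ u, (u, r₁) ∈ Sᶜ := fun u hu =>
    (hcross _ _ hu).elim (fun h => hr₁ (h ▸ hu)) fun h => hr₁ (h ▸ hmem)
  have hcol_free : ∀ u, (u, r₀) ∉ S → Prod.mk u ⁻¹' S = ∅ := fun u hu =>
    Set.eq_empty_of_forall_notMem fun w hw =>
      (hcross _ _ hw).elim (fun h => hu (h ▸ hmem)) fun h => hu (h ▸ hw)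
  have hreach : ∀ z : ↥Sᶜ, ∃ u, ((G □ H).induce Sᶜ).Reachable z ⟨(u, r₁), hrow₁ u⟩ := by
    have hb : 0 < b := hC ▸ (Set.nonempty_of_mem (s := Prod.mk c₀ ⁻¹' S) hmem).ncard_pos
    have hdown : ∀ u, (u, r₀) ∉ S → ∀ v (h : (u, v) ∈ Sᶜ),
        ((G □ H).induce Sᶜ).Reachable ⟨(u, v), h⟩ ⟨(u, r₁), hrow₁ u⟩ := fun u hu _ h =>
      hHb.reachable_induce_compl_of_col (by rwa [hcol_free u hu, Set.ncard_empty]) h (hrow₁ u)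
    rintro ⟨⟨u, v⟩, huv⟩
    by_cases hu : (u, r₀) ∈ S
    · obtain ⟨p, hup, hp⟩ := hGa.exists_adj_notMem hR.le hu
      have hpv : (p, v) ∈ Sᶜ := fun h =>
        (hcross _ _ h).elim (fun h' => hp (h' ▸ hmem)) fun h' => huv (h' ▸ hu)
      have hadj : ((G □ H).induce Sᶜ).Adj ⟨(u, v), huv⟩ ⟨(p, v), hpv⟩ :=
        boxProd_adj.2 (Or.inl ⟨hup, rfl⟩)
      exact ⟨p, hadj.reachable.trans (hdown p hp v hpv)⟩
    · exact ⟨u, hdown u hu v huv⟩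
  have ha : ((·, r₁) ⁻¹' S).ncard < a := by
    rw [(Set.eq_empty_of_forall_notMem hrow₁ : (·, r₁) ⁻¹' S = ∅), Set.ncard_empty, ← hR]
    exact (Set.nonempty_of_mem (s := (·, r₀) ⁻¹' S) hmem).ncard_pos
  intro x y
  obtain ⟨u, hx⟩ := hreach x
  obtain ⟨u', hy⟩ := hreach y
  exact hx.trans ((hGa.reachable_induce_compl_of_row ha (hrow₁ u) (hrow₁ u')).trans hy.symm)

theorem KConnected.boxProd [Fintype V] [Fintype W] (hG : G.Connected) (hH : H.Connected)
    (hGa : KConnected G a) (hHb : KConnected H b) : KConnected (G □ H) (a + b) := by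
  have hcard : a + b < Nat.card (V × W) := by
    have := hGa.1
    have := hHb.1
    rw [Nat.card_prod]
    nlinarith
  refine ⟨hcard, fun S _ hS => ?_⟩
  have : Nonempty ↥Sᶜ := Set.nonempty_coe_sort.2 <| Set.nonempty_compl.2 fun h => by
    rw [h, Set.ncard_univ] at hS
    omega
  refine ⟨?_⟩
  by_cases hcol : ∀ u, (Prod.mk u ⁻¹' S).ncard < b
  · exact preconnected_induce_compl_of_forall_col hG hGa hHb hS hcol
  by_cases hrow : ∀ w, ((·, w) ⁻¹' S).ncard < a
  · rw [← preconnected_induce_compl_swap_iff]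
    refine preconnected_induce_compl_of_forall_col hH hHb hGa ?_ hrow
    rw [← Set.image_swap_eq_preimage_swap, Set.ncard_image_of_injective _ Prod.swap_injective]
    omega
  push Not at hcol hrow
  obtain ⟨c₀, hc₀⟩ := hcol
  obtain ⟨r₀, hr₀⟩ := hrow
  exact preconnected_induce_compl_of_col_row hGa hHb hS hc₀ hr₀

end BoxProdConnectivity

/-- Sabidussi: `κ(G □ H) ≥ κ(G) + κ(H)` for connected graphs. -/
theorem vconn_boxProd_ge {V W : Type*} [Fintype V] [Fintype W]
    (G : SimpleGraph V) (H : SimpleGraph W) (hG : G.Connected) (hH : H.Connected) :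
    vconn G + vconn H ≤ vconn (G □ H) :=
  ((kConnected_vconn hG).boxProd hG hH (kConnected_vconn hH)).le_vconn
end

section
/- For n ≥ 4, the lexicographic product of the star K_{1,n−1} with the path P₃ satisfies κ₃(K_{1,n−1} ∘ P₃) = 3. -/
open SimpleGraph

/-!
Write `(none, k)` for the centre column of `K_{1,m} ∘ P₃` and `(some u, k)` for the column of
leaf `u`: every leaf-column vertex is adjacent to every centre vertex, and distinct leaf columns
are not adjacent.

Upper bound: let `S` consist of three vertices in distinct leaf columns. A tree joining two of them
must leave a leaf column, so it contains a centre vertex; internally disjoint trees share only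
vertices of `S`, and the centre column has three vertices.

Lower bound: split by the number of centre vertices in `S`. If `S` avoids the centre column (or is
the centre column), the stars from the three centre vertices (from the three vertices of one leaf
column) work. Otherwise take one star centred in `S`, and two trees through private vertices
outside `S` (stars, possibly with one pendant edge into a fresh leaf column) having no edge inside
`S`; a common edge of two trees meeting only in `S` would lie inside `S`.
-/

namespace SimpleGraph

variable {V : Type*} {G : SimpleGraph V}

namespace Subgraph

theorem isAcyclic_spanningCoe_iff {H : G.Subgraph} :
    H.spanningCoe.IsAcyclic ↔ H.coe.IsAcyclic := by
  refine ⟨fun h => h.comap ⟨Subtype.val, id⟩ Subtype.val_injective, fun h w c hc => ?_⟩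
  have hs : ∀ x ∈ c.support, x ∈ H.verts := by
    intro x hx
    obtain ⟨e, he, hxe⟩ := (Walk.mem_support_iff_exists_mem_edges_of_not_nil hc.not_nil).mp hx
    induction e using Sym2.ind with
    | _ a b =>
      have hab : H.Adj a b := c.adj_of_mem_edges he
      rcases Sym2.mem_iff.mp hxe with rfl | rfl
      exacts [hab.fst_mem, hab.snd_mem]
  have hc' : (c.induce H.verts hs).IsCycle := by
    rwa [← Walk.isCycle_map_iff_of_injective
      (f := (Embedding.induce (G := H.spanningCoe) H.verts).toHom)
      (Embedding.induce (G := H.spanningCoe) H.verts).injective, Walk.map_induce]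
  exact h.comap (⟨id, id⟩ : H.spanningCoe.induce H.verts →g H.coe) Function.injective_id _ hc'

theorem isTree_coe_sup_subgraphOfAdj {T : G.Subgraph} (hT : T.coe.IsTree) {u v : V}
    (huv : G.Adj u v) (hu : u ∈ T.verts) (hv : v ∉ T.verts) :
    (T ⊔ G.subgraphOfAdj huv).coe.IsTree := by
  refine ⟨(connected_sup ⟨hT.1.preconnected⟩ (subgraphOfAdj_connected huv).preconnected
    ⟨u, hu, by simp⟩).coe, ?_⟩
  have hnreach : ¬T.spanningCoe.Reachable u v := by
    rintro ⟨p⟩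
    cases p.reverse with
    | nil => exact hv hu
    | cons h _ => exact hv h.fst_mem
  rw [← isAcyclic_spanningCoe_iff, sup_spanningCoe, spanningCoe_subgraphOfAdj]
  exact (isAcyclic_spanningCoe_iff.mpr hT.2).sup_edge_of_not_reachable hnreach

end Subgraph

def starSubgraph (G : SimpleGraph V) (h : V) (L : Set V) : G.Subgraph where
  verts := insert h L
  Adj a b := G.Adj a b ∧ (a = h ∧ b ∈ L ∨ b = h ∧ a ∈ L)
  adj_sub hab := hab.1
  edge_vert := by rintro a b ⟨-, ⟨rfl, -⟩ | ⟨-, ha⟩⟩ <;> simp [*]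
  symm := ⟨fun _ _ hab => ⟨hab.1.symm, hab.2.symm⟩⟩

@[simp] theorem starSubgraph_verts {h : V} {L : Set V} :
    (G.starSubgraph h L).verts = insert h L := rfl

@[simp] theorem starSubgraph_adj {h : V} {L : Set V} {a b : V} :
    (G.starSubgraph h L).Adj a b ↔ G.Adj a b ∧ (a = h ∧ b ∈ L ∨ b = h ∧ a ∈ L) := Iff.rfl

theorem isTree_coe_starSubgraph {h : V} {L : Set V} (hL : ∀ x ∈ L, G.Adj h x) :
    (G.starSubgraph h L).coe.IsTree := by
  convert isTree_starGraph (⟨h, Set.mem_insert h L⟩ : (G.starSubgraph h L).verts)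
  ext ⟨a, ha⟩ ⟨b, hb⟩
  simp only [Subgraph.coe_adj, starSubgraph_adj, starGraph_adj, ne_eq, Subtype.ext_iff]
  constructor
  · rintro ⟨hab, ⟨rfl, hb⟩ | ⟨rfl, ha⟩⟩
    exacts [⟨hab.ne, .inl rfl⟩, ⟨hab.ne, .inr rfl⟩]
  · rintro ⟨hab, rfl | rfl⟩
    · have hb' : b ∈ L := (Set.mem_insert_iff.mp hb).resolve_left (Ne.symm hab)
      exact ⟨hL b hb', .inl ⟨rfl, hb'⟩⟩
    · have ha' : a ∈ L := (Set.mem_insert_iff.mp ha).resolve_left hab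
      exact ⟨(hL a ha').symm, .inr ⟨rfl, ha'⟩⟩

end SimpleGraph

section Steiner

variable {V : Type*} {G : SimpleGraph V} {S : Set V}

def IsSteinerPacking {n : ℕ} (G : SimpleGraph V) (S : Set V) (T : Fin n → G.Subgraph) : Prop :=
  (∀ i, IsSteinerTree G S (T i)) ∧ ∀ i j, i ≠ j → IntDisjoint S (T i) (T j)

theorem IntDisjoint.symm {T₁ T₂ : G.Subgraph} (h : IntDisjoint S T₁ T₂) : IntDisjoint S T₂ T₁ :=
  ⟨Set.inter_comm T₁.verts T₂.verts ▸ h.1, fun u v huv => h.2 u v huv.symm⟩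

theorem intDisjoint_of_inter_eq {T₁ T₂ : G.Subgraph} (hS : T₁.verts ∩ T₂.verts = S)
    (hT₂ : ∀ a b, T₂.Adj a b → a ∉ S ∨ b ∉ S) : IntDisjoint S T₁ T₂ := by
  refine ⟨hS, fun a b ⟨h₁, h₂⟩ => ?_⟩
  rcases hT₂ a b h₂ with h | h
  exacts [h (hS ▸ ⟨h₁.fst_mem, h₂.fst_mem⟩), h (hS ▸ ⟨h₁.snd_mem, h₂.snd_mem⟩)]

theorem isSteinerPacking_starSubgraph {n : ℕ} {h : Fin n → V} (hinj : Function.Injective h)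
    (hS : ∀ i, h i ∉ S) (hadj : ∀ i, ∀ x ∈ S, G.Adj (h i) x) :
    IsSteinerPacking G S fun i => G.starSubgraph (h i) S := by
  refine ⟨fun i => ⟨isTree_coe_starSubgraph (hadj i), Set.subset_insert _ _⟩,
    fun i j hij => intDisjoint_of_inter_eq ?_ ?_⟩
  · ext x
    simp only [starSubgraph_verts, Set.mem_inter_iff, Set.mem_insert_iff]
    constructor
    · rintro ⟨hx | hx, hx' | hx'⟩
      exacts [absurd (hinj (hx.symm.trans hx')) hij, hx', hx, hx]
    · exact fun hx => ⟨.inr hx, .inr hx⟩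
  · rintro a b ⟨-, ⟨rfl, -⟩ | ⟨rfl, -⟩⟩
    exacts [.inl (hS j), .inr (hS j)]

theorem isSteinerPacking_three {T₀ T₁ T₂ : G.Subgraph} {P₁ P₂ : Set V}
    (ht₀ : T₀.coe.IsTree) (ht₁ : T₁.coe.IsTree) (ht₂ : T₂.coe.IsTree)
    (hv₀ : T₀.verts = S) (hv₁ : T₁.verts = S ∪ P₁) (hv₂ : T₂.verts = S ∪ P₂)
    (hP : Disjoint P₁ P₂) (he₁ : ∀ a b, T₁.Adj a b → a ∉ S ∨ b ∉ S)
    (he₂ : ∀ a b, T₂.Adj a b → a ∉ S ∨ b ∉ S) :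
    IsSteinerPacking G S ![T₀, T₁, T₂] := by
  have d₀₁ : IntDisjoint S T₀ T₁ := intDisjoint_of_inter_eq (by simp [hv₀, hv₁]) he₁
  have d₀₂ : IntDisjoint S T₀ T₂ := intDisjoint_of_inter_eq (by simp [hv₀, hv₂]) he₂
  have d₁₂ : IntDisjoint S T₁ T₂ := intDisjoint_of_inter_eq
    (by rw [hv₁, hv₂, ← Set.union_inter_distrib_left, hP.inter_eq, Set.union_empty]) he₂
  refine ⟨fun i => ?_, fun i j hij => ?_⟩
  · fin_cases i
    exacts [⟨ht₀, hv₀.ge⟩, ⟨ht₁, hv₁ ▸ Set.subset_union_left⟩, ⟨ht₂, hv₂ ▸ Set.subset_union_left⟩]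
  · fin_cases i <;> fin_cases j
    all_goals first
      | exact absurd rfl hij
      | assumption
      | exact IntDisjoint.symm ‹_›

theorem IsSteinerPacking.le_card {ι : Type*} [Finite ι] {n : ℕ} {T : Fin n → G.Subgraph}
    (hT : IsSteinerPacking G S T) {f : ι → V} (hf : ∀ k, f k ∉ S)
    (hmeet : ∀ i, ∃ k, f k ∈ (T i).verts) : n ≤ Nat.card ι := by
  choose k hk using hmeet
  have hinj : Function.Injective k := fun i j hij => by
    by_contra hne
    exact hf (k i) ((hT.2 i j hne).1 ▸ ⟨hk i, hij ▸ hk j⟩)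
  simpa using Nat.card_le_card_of_injective k hinj

theorem bddAbove_isSteinerPacking [Finite V] (hS : S.Nontrivial) :
    BddAbove {n | ∃ T : Fin n → G.Subgraph, IsSteinerPacking G S T} := by
  refine ⟨Nat.card (Sym2 V), fun n ⟨T, hT⟩ => ?_⟩
  obtain ⟨x, hx⟩ := hS.nonempty
  have hedge : ∀ i, ∃ y, (T i).Adj x y := fun i =>
    have := (hS.mono (hT.1 i).2).coe_sort
    Subgraph.Preconnected.exists_adj_of_nontrivial ⟨(hT.1 i).1.1.preconnected⟩ ⟨x, (hT.1 i).2 hx⟩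
  choose y hy using hedge
  have hinj : Function.Injective fun i => s(x, y i) := fun i j hij => by
    by_contra hne
    exact (hT.2 i j hne).2 x (y i) ⟨hy i, Sym2.congr_right.mp hij ▸ hy j⟩
  simpa using Nat.card_le_card_of_injective _ hinj

theorem le_steinerConn [Finite V] (hS : S.Nontrivial) {n : ℕ} {T : Fin n → G.Subgraph}
    (hT : IsSteinerPacking G S T) : n ≤ steinerConn G S :=
  le_csSup (bddAbove_isSteinerPacking hS) ⟨T, hT⟩

theorem steinerConn_le_card {ι : Type*} [Finite ι] {f : ι → V} (hf : ∀ k, f k ∉ S)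
    (hmeet : ∀ T : G.Subgraph, IsSteinerTree G S T → ∃ k, f k ∈ T.verts) :
    steinerConn G S ≤ Nat.card ι :=
  csSup_le' fun _ ⟨_, hT⟩ => IsSteinerPacking.le_card hT hf fun i => hmeet _ (hT.1 i)

theorem genConn_eq_of_le {k c : ℕ} (h : ∀ S : Set V, S.ncard = k → c ≤ steinerConn G S)
    {S₀ : Set V} (hS₀ : S₀.ncard = k) (h₀ : steinerConn G S₀ ≤ c) : genConn G k = c := by
  unfold genConn
  refine le_antisymm (le_trans (Nat.sInf_le ⟨S₀, hS₀, rfl⟩) h₀) (le_csInf ⟨_, S₀, hS₀, rfl⟩ ?_)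
  rintro _ ⟨S, hS, rfl⟩
  exact h S hS

end Steiner

theorem exists_mem_support_adj_of_lexProd_walk {V W : Type*} {G : SimpleGraph V}
    {H : SimpleGraph W} {x y : V × W} (p : (lexProd G H).Walk x y) (hxy : x.1 ≠ y.1) :
    ∃ w ∈ p.support, G.Adj x.1 w.1 := by
  induction p with
  | nil => exact absurd rfl hxy
  | cons h q ih =>
    rcases h with h | ⟨heq, -⟩
    · exact ⟨_, List.mem_cons_of_mem _ q.start_mem_support, h⟩
    · obtain ⟨w, hw, hadj⟩ := ih (heq ▸ hxy)
      exact ⟨w, List.mem_cons_of_mem _ hw, heq ▸ hadj⟩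

abbrev starLexPath (m : ℕ) : SimpleGraph (Option (Fin m) × Fin 3) :=
  lexProd (_root_.starGraph m) (pathGraph 3)

namespace starLexPath

variable {m : ℕ}

theorem adj_center {x : Option (Fin m) × Fin 3} (hx : x.1 ≠ none) (k : Fin 3) :
    (starLexPath m).Adj (none, k) x :=
  Or.inl ⟨hx.symm, .inl rfl⟩

theorem adj_leaf {x : Option (Fin m) × Fin 3} (hx : x.1 = none) (u : Fin m) (k : Fin 3) :
    (starLexPath m).Adj (some u, k) x :=
  Or.inl ⟨hx ▸ Option.some_ne_none u, .inr hx⟩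

theorem adj_of_pathGraph_adj (u : Option (Fin m)) {r r' : Fin 3} (h : (pathGraph 3).Adj r r') :
    (starLexPath m).Adj (u, r) (u, r') :=
  Or.inr ⟨rfl, h⟩

theorem exists_center_mem_verts {T : (starLexPath m).Subgraph} (hT : T.coe.Preconnected)
    {x y : Option (Fin m) × Fin 3} (hx : x ∈ T.verts) (hy : y ∈ T.verts) (hx₁ : x.1 ≠ none)
    (hxy : x.1 ≠ y.1) : ∃ k, (none, k) ∈ T.verts := by
  obtain ⟨p⟩ := hT ⟨x, hx⟩ ⟨y, hy⟩
  obtain ⟨w, hw, -, hw₁⟩ := exists_mem_support_adj_of_lexProd_walk (p.map T.hom) hxy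
  rw [Walk.support_map, List.mem_map] at hw
  obtain ⟨⟨⟨w₁, w₂⟩, hw⟩, -, rfl⟩ := hw
  obtain rfl : w₁ = none := hw₁.resolve_left hx₁
  exact ⟨w₂, hw⟩

theorem isSteinerPacking_centerStars {S : Set (Option (Fin m) × Fin 3)}
    (hS : ∀ x ∈ S, x.1 ≠ none) :
    IsSteinerPacking (starLexPath m) S fun k => (starLexPath m).starSubgraph (none, k) S :=
  isSteinerPacking_starSubgraph (fun _ _ h => (Prod.mk.inj h).2) (fun _ hk => hS _ hk rfl)
    fun k _ hx => adj_center (hS _ hx) k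

theorem isSteinerPacking_leafStars (u : Fin m) {S : Set (Option (Fin m) × Fin 3)}
    (hS : ∀ x ∈ S, x.1 = none) :
    IsSteinerPacking (starLexPath m) S fun k => (starLexPath m).starSubgraph (some u, k) S :=
  isSteinerPacking_starSubgraph (fun _ _ h => (Prod.mk.inj h).2)
    (fun _ hk => Option.some_ne_none u (hS _ hk)) fun k _ hx => adj_leaf (hS _ hx) u k

theorem exists_isSteinerPacking_one_center (hm : 2 < m) (a : Fin 3) (u₁ u₂ : Fin m)
    (r₁ r₂ : Fin 3) :
    ∃ T : Fin 3 → (starLexPath m).Subgraph,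
      IsSteinerPacking (starLexPath m) {(none, a), (some u₁, r₁), (some u₂, r₂)} T := by
  obtain ⟨k₁, k₂, hk, hk₁, hk₂⟩ : ∃ k₁ k₂ : Fin 3, k₁ ≠ k₂ ∧ k₁ ≠ a ∧ k₂ ≠ a := by
    revert a; decide
  set S : Set (Option (Fin m) × Fin 3) := {(none, a), (some u₁, r₁), (some u₂, r₂)}
  obtain ⟨u, hu₁, hu₂⟩ := Fin.exists_ne_and_ne_of_two_lt u₁ u₂ hm
  have spider : ∀ k ≠ a, ∃ T : (starLexPath m).Subgraph, T.coe.IsTree ∧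
      T.verts = S ∪ {(none, k), (some u, k)} ∧ ∀ x y, T.Adj x y → x ∉ S ∨ y ∉ S := by
    intro k hk
    have hpend : (starLexPath m).Adj (some u, k) (none, a) := adj_leaf rfl u k
    refine ⟨_, Subgraph.isTree_coe_sup_subgraphOfAdj
      (isTree_coe_starSubgraph (h := (none, k)) (L := {(some u₁, r₁), (some u₂, r₂), (some u, k)})
        (by simp [adj_center])) hpend (by simp) (by simp [hk.symm]), ?_, ?_⟩
    · ext x
      simp only [Subgraph.verts_sup, starSubgraph_verts, subgraphOfAdj_verts, S]
      simp only [Set.mem_union, Set.mem_insert_iff, Set.mem_singleton_iff]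
      tauto
    · simp only [Subgraph.sup_adj, starSubgraph_adj, subgraphOfAdj_adj, Sym2.eq_iff, S]
      rintro x y (⟨-, ⟨rfl, -⟩ | ⟨rfl, -⟩⟩ | ⟨rfl, rfl⟩ | ⟨rfl, rfl⟩) <;> simp [hk, hu₁, hu₂]
  obtain ⟨T₁, ht₁, hv₁, he₁⟩ := spider k₁ hk₁
  obtain ⟨T₂, ht₂, hv₂, he₂⟩ := spider k₂ hk₂
  exact ⟨_, isSteinerPacking_three (isTree_coe_starSubgraph (by simp [adj_center])) ht₁ ht₂
    rfl hv₁ hv₂ (by simp [hk.symm]) he₁ he₂⟩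

theorem exists_isSteinerPacking_two_centers (hm : 1 < m) (a b : Fin 3) (u : Fin m)
    (r : Fin 3) :
    ∃ T : Fin 3 → (starLexPath m).Subgraph,
      IsSteinerPacking (starLexPath m) {(none, a), (none, b), (some u, r)} T := by
  set S : Set (Option (Fin m) × Fin 3) := {(none, a), (none, b), (some u, r)}
  obtain ⟨c, hca, hcb⟩ := Fin.exists_ne_and_ne_of_two_lt a b (by norm_num)
  obtain ⟨r', hr'⟩ : ∃ r', (pathGraph 3).Adj r r' := by
    simp only [pathGraph_adj]; revert r; decide
  have := Fin.nontrivial_iff_two_le.mpr hm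
  obtain ⟨w, hw⟩ := exists_ne u
  have ht₀ := isTree_coe_starSubgraph (G := starLexPath m) (h := (some u, r))
    (L := {(none, a), (none, b)}) (by simp [adj_leaf])
  have ht₁ := isTree_coe_starSubgraph (G := starLexPath m) (h := (some u, r')) (L := S)
    (by simp [S, adj_leaf, adj_of_pathGraph_adj _ hr'.symm])
  have hpend : (starLexPath m).Adj (none, c) (some u, r) := adj_center (by simp) c
  have ht₂ := Subgraph.isTree_coe_sup_subgraphOfAdj (isTree_coe_starSubgraph (G := starLexPath m)
    (h := (some w, 0)) (L := {(none, a), (none, b), (none, c)}) (by simp [adj_leaf]))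
    hpend (by simp) (by simp [hw.symm])
  refine ⟨_, isSteinerPacking_three ht₀ ht₁ ht₂ (P₁ := {(some u, r')})
    (P₂ := {(some w, 0), (none, c)}) ?_ (Set.union_singleton ..).symm ?_ (by simp [hw.symm]) ?_ ?_⟩
  · ext x
    simp only [starSubgraph_verts, S, Set.mem_insert_iff, Set.mem_singleton_iff]
    tauto
  · ext x
    simp only [Subgraph.verts_sup, starSubgraph_verts, subgraphOfAdj_verts, S]
    simp only [Set.mem_union, Set.mem_insert_iff, Set.mem_singleton_iff]
    tauto
  · rintro x y ⟨-, ⟨rfl, -⟩ | ⟨rfl, -⟩⟩ <;> simp [S, hr'.ne']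
  · simp only [Subgraph.sup_adj, starSubgraph_adj, subgraphOfAdj_adj, Sym2.eq_iff, S]
    rintro x y (⟨-, ⟨rfl, -⟩ | ⟨rfl, -⟩⟩ | ⟨rfl, rfl⟩ | ⟨rfl, rfl⟩) <;> simp [hca, hcb, hw]

theorem exists_isSteinerPacking_of_ncard_eq_three (hm : 2 < m)
    {S : Set (Option (Fin m) × Fin 3)} (hS : S.ncard = 3) :
    ∃ T : Fin 3 → (starLexPath m).Subgraph, IsSteinerPacking (starLexPath m) S T := by
  obtain ⟨x, y, z, -, -, -, rfl⟩ := Set.ncard_eq_three.mp hS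
  rcases x with ⟨_ | u₁, r₁⟩ <;> rcases y with ⟨_ | u₂, r₂⟩ <;> rcases z with ⟨_ | u₃, r₃⟩
  · exact ⟨_, isSteinerPacking_leafStars ⟨0, by omega⟩ (by simp)⟩
  · exact exists_isSteinerPacking_two_centers (by omega) _ _ _ _
  · rw [Set.pair_comm]
    exact exists_isSteinerPacking_two_centers (by omega) _ _ _ _
  · exact exists_isSteinerPacking_one_center hm _ _ _ _ _
  · rw [Set.insert_comm, Set.pair_comm]
    exact exists_isSteinerPacking_two_centers (by omega) _ _ _ _
  · rw [Set.insert_comm]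
    exact exists_isSteinerPacking_one_center hm _ _ _ _ _
  · rw [Set.pair_comm, Set.insert_comm]
    exact exists_isSteinerPacking_one_center hm _ _ _ _ _
  · exact ⟨_, isSteinerPacking_centerStars (by simp)⟩

end starLexPath

open starLexPath in
/-- `κ₃(K_{1,n-1} ∘ P₃) = 3` for `n ≥ 4`. -/
theorem genConn_three_star_lexProd_path (n : ℕ) (hn : 4 ≤ n) :
    genConn (lexProd (_root_.starGraph (n - 1)) (pathGraph 3)) 3 = 3 := by
  have hm : 2 < n - 1 := by omega
  set S₀ : Set (Option (Fin (n - 1)) × Fin 3) :=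
    {(some ⟨0, by omega⟩, 0), (some ⟨1, by omega⟩, 0), (some ⟨2, by omega⟩, 0)}
  have hS₀ : S₀.ncard = 3 := Set.ncard_eq_three.mpr ⟨_, _, _, by simp, by simp, by simp, rfl⟩
  refine genConn_eq_of_le (fun S hS => ?_) hS₀ ?_
  · obtain ⟨T, hT⟩ := exists_isSteinerPacking_of_ncard_eq_three hm hS
    exact le_steinerConn (Set.one_lt_ncard_iff_nontrivial.mp (by omega)) hT
  · simpa using steinerConn_le_card (f := fun k : Fin 3 => (none, k)) (by simp)
      fun T hT => exists_center_mem_verts hT.1.1.preconnected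
        (hT.2 (Set.mem_insert _ _)) (hT.2 (Set.mem_insert_of_mem _ (Set.mem_insert _ _)))
        (by simp) (by simp)
end
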